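/- Let (X, μ) be a σ-finite measure space and ι a finite index type; for each i ∈ ι let (Y_i, ν_i) be a σ-finite measure space, H_i : Y_i → ℝ measurable, β_i > 0 with T_i = 1/β_i, Z_i = ∫ exp(−β_i·H_i) dν_i satisfying 0 < Z_i < ∞, and τ_i = Z_i⁻¹·exp(−β_i·H_i) the canonical density, with H_i·τ_i and τ_i·log τ_i integrable. Let ρ_A⁰ be a probability density on (X, μ) with ρ_A⁰·log ρ_A⁰ integrable, let the initial joint density on X × ∏_i Y_i (with the product measure) be ρ₀(x, y) = ρ_A⁰(x)·∏_i τ_i(y_i), let Φ be a measurable bijection of X × ∏_i Y_i with measurable inverse, both measure-preserving for the product measure, and let ρ₁ = ρ₀ ∘ Φ⁻¹, with the marginal ρ_A¹ on X and the marginal ρ_{B_i}¹ on each Y_i having integrable ρ·log ρ and with H_i·ρ_{B_i}¹ integrable. Define ⟨Q_i⟩ = ∫ H_i·τ_i dν_i − ∫ H_i·ρ_{B_i}¹ dν_i. Then ∑_{i∈ι} ⟨Q_i⟩/T_i ≤ S[ρ_A¹] − S[ρ_A⁰]. -/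

import Mathlib

/-!
Put `σ(x, y) = ρ_A¹(x) ∏ τ_i(y_i)`. Gibbs' inequality gives `∫ ρ₁ log σ ≤ ∫ ρ₁ log ρ₁`, and
`ρ₁ log σ` only sees the marginals of `ρ₁`, so the left side is
`∫ ρ_A¹ log ρ_A¹ + ∑ i, ∫ ρ_{B_i}¹ log τ_i`. The right side is unchanged by the measure-preserving
`Φ`, and for the product state `ρ₀` it splits as `∫ ρ_A⁰ log ρ_A⁰ + ∑ i, ∫ τ_i log τ_i`.
Since `log τ_i = -log Z_i - β_i H_i`, each difference `∫ ρ_{B_i}¹ log τ_i - ∫ τ_i log τ_i` is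
`β_i ⟨Q_i⟩ = ⟨Q_i⟩ / T_i`.
-/

open MeasureTheory Real

theorem mul_log_add_sub_le_mul_log {a b : ℝ} (ha : 0 ≤ a) (hb : 0 < b) :
    a * log b + a - b ≤ a * log a := by
  rcases ha.eq_or_lt with rfl | ha
  · simpa using hb.le
  · have h := mul_le_mul_of_nonneg_left (log_le_sub_one_of_pos (div_pos hb ha)) ha.le
    rw [log_div hb.ne' ha.ne', mul_sub_one, mul_div_cancel₀ _ ha.ne'] at h
    linarith

theorem mul_mul_log_mul (x y : ℝ) : x * y * log (x * y) = x * log x * y + x * (y * log y) := by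
  have h := negMulLog_mul x y
  simp only [negMulLog] at h
  linear_combination -h

section Density

variable {W : Type*} [MeasurableSpace W]

structure IsProbabilityDensity (m : Measure W) (ρ : W → ℝ) : Prop where
  measurable : Measurable ρ
  nonneg : 0 ≤ ρ
  integral_eq_one : ∫ w, ρ w ∂m = 1

namespace IsProbabilityDensity

variable {m : Measure W} {f g : W → ℝ}

theorem integrable (hf : IsProbabilityDensity m f) : Integrable f m :=
  integrable_of_integral_eq_one hf.integral_eq_one

theorem comp_measurePreserving {W' : Type*} [MeasurableSpace W'] {m' : Measure W'} {ρ : W' → ℝ}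
    (hρ : IsProbabilityDensity m' ρ) (e : W ≃ᵐ W') (he : MeasurePreserving e m m') :
    IsProbabilityDensity m (ρ ∘ e) where
  measurable := hρ.measurable.comp e.measurable
  nonneg w := hρ.nonneg (e w)
  integral_eq_one := (he.integral_comp' ρ).trans hρ.integral_eq_one

theorem integral_mul_log_le (hf : IsProbabilityDensity m f) (hg : IsProbabilityDensity m g)
    (hfg : ∀ᵐ w ∂m, g w = 0 → f w = 0) (hflogf : Integrable (fun w => f w * log (f w)) m)
    (hflogg : Integrable (fun w => f w * log (g w)) m) :
    ∫ w, f w * log (g w) ∂m ≤ ∫ w, f w * log (f w) ∂m := by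
  have hpt : ∀ᵐ w ∂m, f w * log (g w) + f w - g w ≤ f w * log (f w) := by
    filter_upwards [hfg] with w hw
    rcases (hg.nonneg w).eq_or_lt with hgw | hgw
    · simp [hw hgw.symm, ← hgw]
    · exact mul_log_add_sub_le_mul_log (hf.nonneg w) hgw
  have h := integral_mono_ae ((hflogg.add hf.integrable).sub hg.integrable) hflogf hpt
  rw [integral_sub' (hflogg.add hf.integrable) hg.integrable, integral_add' hflogg hf.integrable,
    hf.integral_eq_one, hg.integral_eq_one] at h
  linarith

end IsProbabilityDensity

end Density

section LogProduct

variable {α ι : Type*} [MeasurableSpace α] [Fintype ι] {m : Measure α} {f a : α → ℝ}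
  {b : ι → α → ℝ}

theorem mul_log_mul_prod_ae_eq (hb : ∀ i x, b i x ≠ 0) (hfa : ∀ᵐ x ∂m, a x = 0 → f x = 0) :
    (fun x => f x * log (a x * ∏ i, b i x)) =ᵐ[m]
      fun x => f x * log (a x) + ∑ i, f x * log (b i x) := by
  filter_upwards [hfa] with x hx
  by_cases ha : a x = 0
  · simp [hx ha]
  · rw [log_mul ha (Finset.prod_ne_zero_iff.2 fun i _ => hb i x),
      log_prod fun i _ => hb i x, mul_add, Finset.mul_sum]

theorem integrable_mul_log_mul_prod (hb : ∀ i x, b i x ≠ 0) (hfa : ∀ᵐ x ∂m, a x = 0 → f x = 0)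
    (ha : Integrable (fun x => f x * log (a x)) m)
    (hbi : ∀ i, Integrable (fun x => f x * log (b i x)) m) :
    Integrable (fun x => f x * log (a x * ∏ i, b i x)) m :=
  (ha.add (integrable_finsetSum _ fun i _ => hbi i)).congr (mul_log_mul_prod_ae_eq hb hfa).symm

theorem integral_mul_log_mul_prod (hb : ∀ i x, b i x ≠ 0) (hfa : ∀ᵐ x ∂m, a x = 0 → f x = 0)
    (ha : Integrable (fun x => f x * log (a x)) m)
    (hbi : ∀ i, Integrable (fun x => f x * log (b i x)) m) :
    ∫ x, f x * log (a x * ∏ i, b i x) ∂m =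
      ∫ x, f x * log (a x) ∂m + ∑ i, ∫ x, f x * log (b i x) ∂m := by
  rw [integral_congr_ae (mul_log_mul_prod_ae_eq hb hfa),
    integral_add ha (integrable_finsetSum _ fun i _ => hbi i),
    integral_finsetSum _ fun i _ => hbi i]

end LogProduct

section Prod

variable {X Y : Type*} [MeasurableSpace X] [MeasurableSpace Y] {μ : Measure X} {ν : Measure Y}
  {a : X → ℝ} {g : Y → ℝ}

theorem IsProbabilityDensity.prod_mul [SFinite μ] [SFinite ν] (ha : IsProbabilityDensity μ a)
    (hg : IsProbabilityDensity ν g) : IsProbabilityDensity (μ.prod ν) fun p => a p.1 * g p.2 where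
  measurable := (ha.measurable.comp measurable_fst).mul (hg.measurable.comp measurable_snd)
  nonneg p := mul_nonneg (ha.nonneg _) (hg.nonneg _)
  integral_eq_one := by rw [integral_prod_mul, ha.integral_eq_one, hg.integral_eq_one, one_mul]

theorem integrable_mul_log_prod_mul (ha : Integrable a μ) (hg : Integrable g ν)
    (halog : Integrable (fun x => a x * log (a x)) μ)
    (hglog : Integrable (fun y => g y * log (g y)) ν) :
    Integrable (fun p : X × Y => a p.1 * g p.2 * log (a p.1 * g p.2)) (μ.prod ν) := by
  simp_rw [mul_mul_log_mul]
  exact (halog.mul_prod hg).add (ha.mul_prod hglog)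

theorem integral_mul_log_prod_mul [SFinite μ] [SFinite ν] (ha : IsProbabilityDensity μ a)
    (hg : IsProbabilityDensity ν g)
    (halog : Integrable (fun x => a x * log (a x)) μ)
    (hglog : Integrable (fun y => g y * log (g y)) ν) :
    ∫ p, a p.1 * g p.2 * log (a p.1 * g p.2) ∂μ.prod ν =
      ∫ x, a x * log (a x) ∂μ + ∫ y, g y * log (g y) ∂ν := by
  simp_rw [mul_mul_log_mul]
  rw [integral_add (halog.mul_prod hg.integrable) (ha.integrable.mul_prod hglog)]
  simp only [integral_prod_mul (μ := μ) (ν := ν) (fun x => a x * log (a x)) g,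
    integral_prod_mul (μ := μ) (ν := ν) a fun y => g y * log (g y), ha.integral_eq_one,
    hg.integral_eq_one, mul_one, one_mul]

end Prod

-- Turns `(∏ j, f j (y j)) * g (y i)` into a product of one-variable functions, to which Fubini
-- (`integral_fintype_prod_eq_prod`) applies.
theorem prod_update_apply_mul {ι : Type*} [Fintype ι] [DecidableEq ι] {E : ι → Type*}
    (f : ∀ i, E i → ℝ) (i : ι) (g : E i → ℝ) (y : ∀ j, E j) :
    ∏ j, Function.update f i (fun z => f i z * g z) j (y j) = (∏ j, f j (y j)) * g (y i) := by
  rw [← Finset.mul_prod_erase _ _ (Finset.mem_univ i),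
    ← Finset.mul_prod_erase _ (fun j => f j (y j)) (Finset.mem_univ i), Function.update_self,
    mul_right_comm]
  congr 2
  exact Finset.prod_congr rfl fun j hj => by rw [Function.update_of_ne (Finset.ne_of_mem_erase hj)]

theorem prod_mul_log_prod_eq_sum {ι : Type*} [Fintype ι] {E : ι → Type*} {t : ∀ i, E i → ℝ}
    (htne : ∀ i z, t i z ≠ 0) (y : ∀ i, E i) :
    (∏ i, t i (y i)) * log (∏ i, t i (y i)) = ∑ i, (∏ j, t j (y j)) * log (t i (y i)) := by
  rw [log_prod fun i _ => htne i _, Finset.mul_sum]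

section Pi

variable {ι : Type*} [Fintype ι] {E : ι → Type*} [∀ i, MeasurableSpace (E i)]
  {ν : ∀ i, Measure (E i)} [∀ i, SigmaFinite (ν i)] {t : ∀ i, E i → ℝ}

theorem IsProbabilityDensity.pi_prod (ht : ∀ i, IsProbabilityDensity (ν i) (t i)) :
    IsProbabilityDensity (Measure.pi ν) fun y => ∏ i, t i (y i) where
  measurable := Finset.measurable_prod _ fun i _ => (ht i).measurable.comp (measurable_pi_apply i)
  nonneg _ := Finset.prod_nonneg fun i _ => (ht i).nonneg _
  integral_eq_one := by
    rw [integral_fintype_prod_eq_prod, Finset.prod_eq_one fun i _ => (ht i).integral_eq_one]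

theorem integrable_prod_mul_comp_eval (ht : ∀ i, Integrable (t i) (ν i)) {i : ι} {g : E i → ℝ}
    (hg : Integrable (fun z => t i z * g z) (ν i)) :
    Integrable (fun y : ∀ j, E j => (∏ j, t j (y j)) * g (y i)) (Measure.pi ν) := by
  classical
  simp_rw [← prod_update_apply_mul t i g]
  refine Integrable.fintype_prod_dep fun j => ?_
  rcases eq_or_ne j i with rfl | hj
  · simpa using hg
  · simpa [Function.update_of_ne hj] using ht j

theorem integral_prod_mul_comp_eval {i : ι} (ht : ∀ j ≠ i, ∫ z, t j z ∂ν j = 1) (g : E i → ℝ) :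
    ∫ y, (∏ j, t j (y j)) * g (y i) ∂Measure.pi ν = ∫ z, t i z * g z ∂ν i := by
  classical
  simp_rw [← prod_update_apply_mul t i g, integral_fintype_prod_eq_prod]
  rw [← Finset.mul_prod_erase _ _ (Finset.mem_univ i), Function.update_self,
    Finset.prod_eq_one fun j hj => ?_, mul_one]
  rw [Function.update_of_ne (Finset.ne_of_mem_erase hj)]
  exact ht j (Finset.ne_of_mem_erase hj)

theorem integrable_prod_mul_log_prod (ht : ∀ i, Integrable (t i) (ν i)) (htne : ∀ i z, t i z ≠ 0)
    (htlog : ∀ i, Integrable (fun z => t i z * log (t i z)) (ν i)) :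
    Integrable (fun y : ∀ i, E i => (∏ i, t i (y i)) * log (∏ i, t i (y i))) (Measure.pi ν) := by
  simp_rw [prod_mul_log_prod_eq_sum htne]
  exact integrable_finsetSum _ fun i _ => integrable_prod_mul_comp_eval ht (htlog i)

theorem integral_prod_mul_log_prod (ht : ∀ i, IsProbabilityDensity (ν i) (t i))
    (htne : ∀ i z, t i z ≠ 0) (htlog : ∀ i, Integrable (fun z => t i z * log (t i z)) (ν i)) :
    ∫ y, (∏ i, t i (y i)) * log (∏ i, t i (y i)) ∂Measure.pi ν =
      ∑ i, ∫ z, t i z * log (t i z) ∂ν i := by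
  simp_rw [prod_mul_log_prod_eq_sum htne]
  rw [integral_finsetSum _ fun i _ =>
    integrable_prod_mul_comp_eval (fun j => (ht j).integrable) (htlog i)]
  exact Finset.sum_congr rfl fun i _ =>
    integral_prod_mul_comp_eval (fun j _ => (ht j).integral_eq_one) fun z => log (t i z)

end Pi

section WithDensity

variable {α : Type*} [MeasurableSpace α] {m : Measure α} {f : α → ℝ}

theorem integral_withDensity_ofReal (hf : Measurable f) (hf0 : 0 ≤ᵐ[m] f) (g : α → ℝ) :
    ∫ x, g x ∂m.withDensity (fun x => ENNReal.ofReal (f x)) = ∫ x, f x * g x ∂m := by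
  rw [integral_withDensity_eq_integral_toReal_smul hf.ennreal_ofReal
    (ae_of_all _ fun _ => ENNReal.ofReal_lt_top)]
  refine integral_congr_ae (hf0.mono fun x hx => ?_)
  simp [ENNReal.toReal_ofReal hx]

theorem integrable_withDensity_ofReal_iff (hf : Measurable f) (hf0 : 0 ≤ᵐ[m] f) {g : α → ℝ} :
    Integrable g (m.withDensity fun x => ENNReal.ofReal (f x)) ↔
      Integrable (fun x => f x * g x) m := by
  rw [integrable_withDensity_iff_integrable_smul' hf.ennreal_ofReal
    (ae_of_all _ fun _ => ENNReal.ofReal_lt_top)]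
  refine integrable_congr (hf0.mono fun x hx => ?_)
  simp [ENNReal.toReal_ofReal hx]

end WithDensity

section Pushforward

variable {W V : Type*} [MeasurableSpace W] [MeasurableSpace V]

/-- Stated through set integrals, as the reservoir marginals are. Taking `s = univ` shows that `ρc`
is integrable as soon as `∫ ρ ∂m ≠ 0`, so the junk value `0` of non-integrable set integrals does
not interfere. -/
def IsPushforwardDensity (m : Measure W) (ρ : W → ℝ) (c : W → V) (ν : Measure V) (ρc : V → ℝ) :
    Prop :=
  ∀ s, MeasurableSet s → ∫ y in s, ρc y ∂ν = ∫ w in c ⁻¹' s, ρ w ∂m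

namespace IsPushforwardDensity

variable {m : Measure W} {ρ : W → ℝ} {c : W → V} {ν : Measure V} {ρc : V → ℝ}

theorem integral_eq (h : IsPushforwardDensity m ρ c ν ρc) : ∫ y, ρc y ∂ν = ∫ w, ρ w ∂m := by
  simpa using h Set.univ MeasurableSet.univ

theorem integral_eq_one (h : IsPushforwardDensity m ρ c ν ρc) (hρ : IsProbabilityDensity m ρ) :
    ∫ y, ρc y ∂ν = 1 :=
  h.integral_eq.trans hρ.integral_eq_one

theorem ae_nonneg (h : IsPushforwardDensity m ρ c ν ρc) (hρ : IsProbabilityDensity m ρ)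
    (hc : Measurable c) : 0 ≤ᵐ[ν] ρc :=
  ae_nonneg_of_forall_setIntegral_nonneg (integrable_of_integral_eq_one (h.integral_eq_one hρ))
    fun s hs _ => (h s hs).symm ▸ setIntegral_nonneg (hc hs) fun w _ => hρ.nonneg w

theorem ae_eq_zero_of_comp_eq_zero (h : IsPushforwardDensity m ρ c ν ρc)
    (hρ : IsProbabilityDensity m ρ) (hc : Measurable c) (hρc : Measurable ρc) :
    ∀ᵐ w ∂m, ρc (c w) = 0 → ρ w = 0 := by
  have hs : MeasurableSet {y | ρc y = 0} := hρc (measurableSet_singleton 0)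
  have hzero : ∫ w in c ⁻¹' {y | ρc y = 0}, ρ w ∂m = 0 := by
    rw [← h _ hs, setIntegral_congr_fun hs fun y hy => hy, integral_zero]
  exact (ae_restrict_iff' (hc hs)).1 <| (setIntegral_eq_zero_iff_of_nonneg_ae
    (ae_of_all _ fun w => hρ.nonneg w) hρ.integrable.integrableOn).1 hzero

theorem map_withDensity (h : IsPushforwardDensity m ρ c ν ρc) (hρ : IsProbabilityDensity m ρ)
    (hc : Measurable c) :
    (m.withDensity fun w => ENNReal.ofReal (ρ w)).map c =
      ν.withDensity fun y => ENNReal.ofReal (ρc y) := by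
  ext s hs
  rw [Measure.map_apply hc hs, withDensity_apply _ (hc hs), withDensity_apply _ hs,
    ← ofReal_integral_eq_lintegral_ofReal hρ.integrable.integrableOn
      (ae_of_all _ fun w => hρ.nonneg w),
    ← ofReal_integral_eq_lintegral_ofReal
      (integrable_of_integral_eq_one (h.integral_eq_one hρ)).integrableOn
      (ae_restrict_of_ae (h.ae_nonneg hρ hc)), h s hs]

theorem integrable_mul_comp (h : IsPushforwardDensity m ρ c ν ρc) (hρ : IsProbabilityDensity m ρ)
    (hc : Measurable c) (hρc : Measurable ρc) {g : V → ℝ}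
    (hg : Integrable (fun y => ρc y * g y) ν) : Integrable (fun w => ρ w * g (c w)) m := by
  rw [← integrable_withDensity_ofReal_iff hρc (h.ae_nonneg hρ hc),
    ← h.map_withDensity hρ hc] at hg
  exact (integrable_withDensity_ofReal_iff hρ.measurable (ae_of_all _ hρ.nonneg)).1
    (hg.comp_measurable hc)

theorem integral_mul_comp (h : IsPushforwardDensity m ρ c ν ρc) (hρ : IsProbabilityDensity m ρ)
    (hc : Measurable c) (hρc : Measurable ρc) {g : V → ℝ} (hg : Measurable g) :
    ∫ w, ρ w * g (c w) ∂m = ∫ y, ρc y * g y ∂ν := by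
  rw [← integral_withDensity_ofReal hρ.measurable (ae_of_all _ hρ.nonneg),
    ← integral_withDensity_ofReal hρc (h.ae_nonneg hρ hc), ← h.map_withDensity hρ hc,
    integral_map hc.aemeasurable hg.aestronglyMeasurable]

end IsPushforwardDensity

theorem isPushforwardDensity_fst {X Y : Type*} [MeasurableSpace X] [MeasurableSpace Y]
    {μ : Measure X} {ν : Measure Y} [SFinite μ] [SFinite ν] {f : X × Y → ℝ}
    (hf : Integrable f (μ.prod ν)) :
    IsPushforwardDensity (μ.prod ν) f Prod.fst μ fun x => ∫ y, f (x, y) ∂ν := by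
  intro s _
  rw [← Set.prod_univ, setIntegral_prod f hf.integrableOn, Measure.restrict_univ]

end Pushforward

theorem IsProbabilityDensity.integral_prod_right {X Y : Type*} [MeasurableSpace X]
    [MeasurableSpace Y] {μ : Measure X} {ν : Measure Y} [SFinite μ] [SFinite ν]
    {f : X × Y → ℝ} (hf : IsProbabilityDensity (μ.prod ν) f) :
    IsProbabilityDensity μ fun x => ∫ y, f (x, y) ∂ν where
  measurable := hf.measurable.stronglyMeasurable.integral_prod_right'.measurable
  nonneg _ := integral_nonneg fun _ => hf.nonneg _
  integral_eq_one := (isPushforwardDensity_fst hf.integrable).integral_eq_one hf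

section ProductState

variable {X : Type*} [MeasurableSpace X] {μ : Measure X} {ι : Type*} [Fintype ι] {Y : ι → Type*}
  [∀ i, MeasurableSpace (Y i)] {ν : ∀ i, Measure (Y i)} [∀ i, SigmaFinite (ν i)]
  {a : X → ℝ} {t : ∀ i, Y i → ℝ}

theorem integrable_mul_log_prod_pi (ha : IsProbabilityDensity μ a)
    (ht : ∀ i, IsProbabilityDensity (ν i) (t i)) (htne : ∀ i y, t i y ≠ 0)
    (halog : Integrable (fun x => a x * log (a x)) μ)
    (htlog : ∀ i, Integrable (fun y => t i y * log (t i y)) (ν i)) :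
    Integrable (fun p : X × ∀ i, Y i =>
      a p.1 * (∏ i, t i (p.2 i)) * log (a p.1 * ∏ i, t i (p.2 i))) (μ.prod (Measure.pi ν)) :=
  integrable_mul_log_prod_mul ha.integrable (IsProbabilityDensity.pi_prod ht).integrable halog
    (integrable_prod_mul_log_prod (fun i => (ht i).integrable) htne htlog)

theorem integral_mul_log_prod_pi [SFinite μ] (ha : IsProbabilityDensity μ a)
    (ht : ∀ i, IsProbabilityDensity (ν i) (t i)) (htne : ∀ i y, t i y ≠ 0)
    (halog : Integrable (fun x => a x * log (a x)) μ)
    (htlog : ∀ i, Integrable (fun y => t i y * log (t i y)) (ν i)) :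
    ∫ p, a p.1 * (∏ i, t i (p.2 i)) * log (a p.1 * ∏ i, t i (p.2 i)) ∂μ.prod (Measure.pi ν) =
      ∫ x, a x * log (a x) ∂μ + ∑ i, ∫ y, t i y * log (t i y) ∂ν i := by
  rw [integral_mul_log_prod_mul ha (.pi_prod ht) halog
    (integrable_prod_mul_log_prod (fun i => (ht i).integrable) htne htlog),
    integral_prod_mul_log_prod ht htne htlog]

theorem integral_mul_log_marginal_add_sum_le [SFinite μ] {f : X × (∀ i, Y i) → ℝ} {fA : X → ℝ}
    {fB : ∀ i, Y i → ℝ} (hf : IsProbabilityDensity (μ.prod (Measure.pi ν)) f)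
    (hfA : ∀ x, fA x = ∫ y, f (x, y) ∂Measure.pi ν) (hfBm : ∀ i, Measurable (fB i))
    (hfB : ∀ i, IsPushforwardDensity (μ.prod (Measure.pi ν)) f (fun p => p.2 i) (ν i) (fB i))
    (ht : ∀ i, IsProbabilityDensity (ν i) (t i)) (htpos : ∀ i y, 0 < t i y)
    (hflog : Integrable (fun p => f p * log (f p)) (μ.prod (Measure.pi ν)))
    (hfAlog : Integrable (fun x => fA x * log (fA x)) μ)
    (hfBlog : ∀ i, Integrable (fun y => fB i y * log (t i y)) (ν i)) :
    ∫ x, fA x * log (fA x) ∂μ + ∑ i, ∫ y, fB i y * log (t i y) ∂ν i ≤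
      ∫ p, f p * log (f p) ∂μ.prod (Measure.pi ν) := by
  have hA : IsPushforwardDensity (μ.prod (Measure.pi ν)) f Prod.fst μ fA := by
    rw [funext hfA]; exact isPushforwardDensity_fst hf.integrable
  have hfA' : IsProbabilityDensity μ fA := by rw [funext hfA]; exact hf.integral_prod_right
  have hc i : Measurable fun p : X × ∀ j, Y j => p.2 i :=
    (measurable_pi_apply i).comp measurable_snd
  have htne i (p : X × ∀ j, Y j) : t i (p.2 i) ≠ 0 := (htpos i _).ne'
  have hvan := hA.ae_eq_zero_of_comp_eq_zero hf measurable_fst hfA'.measurable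
  have hAi := hA.integrable_mul_comp hf measurable_fst hfA'.measurable hfAlog
  have hBi i := (hfB i).integrable_mul_comp hf (hc i) (hfBm i) (hfBlog i)
  have hσvan : ∀ᵐ p ∂μ.prod (Measure.pi ν), fA p.1 * ∏ i, t i (p.2 i) = 0 → f p = 0 :=
    hvan.mono fun p hp h0 => hp <|
      (mul_eq_zero.1 h0).resolve_right (Finset.prod_ne_zero_iff.2 fun i _ => htne i p)
  calc _ = ∫ p, f p * log (fA p.1 * ∏ i, t i (p.2 i)) ∂μ.prod (Measure.pi ν) := by
        rw [integral_mul_log_mul_prod htne hvan hAi hBi,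
          hA.integral_mul_comp hf measurable_fst hfA'.measurable hfA'.measurable.log]
        congr 1
        exact Finset.sum_congr rfl fun i _ =>
          ((hfB i).integral_mul_comp hf (hc i) (hfBm i) (ht i).measurable.log).symm
    _ ≤ _ := hf.integral_mul_log_le (hfA'.prod_mul (.pi_prod ht)) hσvan hflog
        (integrable_mul_log_mul_prod htne hvan hAi hBi)

end ProductState

theorem log_canonical {Y : Type*} {H τ : Y → ℝ} {β Z : ℝ}
    (hτ : ∀ y, τ y = Z⁻¹ * exp (-β * H y)) (hZ : 0 < Z) (y : Y) :
    log (τ y) = -log Z - β * H y := by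
  rw [hτ, log_mul (inv_ne_zero hZ.ne') (exp_ne_zero _), log_inv, log_exp]
  ring

theorem canonical_pos {Y : Type*} {H τ : Y → ℝ} {β Z : ℝ}
    (hτ : ∀ y, τ y = Z⁻¹ * exp (-β * H y)) (hZ : 0 < Z) (y : Y) : 0 < τ y := by
  rw [hτ]
  positivity

section Canonical

variable {Y : Type*} [MeasurableSpace Y] {ν : Measure Y} {H τ ρ : Y → ℝ} {β Z : ℝ}

theorem isProbabilityDensity_canonical (hH : Measurable H)
    (hτ : ∀ y, τ y = Z⁻¹ * exp (-β * H y)) (hZ : Z = ∫ y, exp (-β * H y) ∂ν) (hZpos : 0 < Z) :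
    IsProbabilityDensity ν τ where
  measurable := by
    rw [funext hτ]
    exact measurable_const.mul (hH.const_mul _).exp
  nonneg y := (canonical_pos hτ hZpos y).le
  integral_eq_one := by
    simp_rw [hτ]
    rw [integral_const_mul, ← hZ, inv_mul_cancel₀ hZpos.ne']

theorem integrable_mul_log_canonical (hτ : ∀ y, τ y = Z⁻¹ * exp (-β * H y)) (hZ : 0 < Z)
    (hρ : Integrable ρ ν) (hHρ : Integrable (fun y => H y * ρ y) ν) :
    Integrable (fun y => ρ y * log (τ y)) ν :=
  ((hρ.const_mul (-log Z)).sub (hHρ.const_mul β)).congr <| ae_of_all _ fun y => by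
    simp only [Pi.sub_apply, log_canonical hτ hZ]
    ring

theorem integral_mul_log_canonical (hτ : ∀ y, τ y = Z⁻¹ * exp (-β * H y)) (hZ : 0 < Z)
    (hρ : ∫ y, ρ y ∂ν = 1) (hHρ : Integrable (fun y => H y * ρ y) ν) :
    ∫ y, ρ y * log (τ y) ∂ν = -log Z - β * ∫ y, H y * ρ y ∂ν := by
  have hρi := integrable_of_integral_eq_one hρ
  calc ∫ y, ρ y * log (τ y) ∂ν = ∫ y, -log Z * ρ y - β * (H y * ρ y) ∂ν := by
        congr 1; ext y; rw [log_canonical hτ hZ]; ring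
    _ = _ := by
        rw [integral_sub (hρi.const_mul _) (hHρ.const_mul _), integral_const_mul,
          integral_const_mul, hρ, mul_one]

end Canonical

theorem fundamental_theorem_statistical_thermodynamics_general
    {X : Type*} [MeasurableSpace X] (μ : Measure X) [SigmaFinite μ]
    {ι : Type*} [Fintype ι] {Y : ι → Type*} [∀ i, MeasurableSpace (Y i)]
    (ν : ∀ i, Measure (Y i)) [∀ i, SigmaFinite (ν i)]
    (H : ∀ i, Y i → ℝ) (hH : ∀ i, Measurable (H i))
    (β : ι → ℝ) (T : ι → ℝ) (hT : ∀ i, T i = 1 / β i)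
    (Z : ι → ℝ) (hZdef : ∀ i, Z i = ∫ y, exp (-β i * H i y) ∂(ν i))
    (hZpos : ∀ i, 0 < Z i)
    (τ : ∀ i, Y i → ℝ) (hτdef : ∀ i, ∀ y, τ i y = (Z i)⁻¹ * exp (-β i * H i y))
    (hHτ : ∀ i, Integrable (fun y => H i y * τ i y) (ν i))
    (ρA0 : X → ℝ) (hρA0m : Measurable ρA0) (hρA00 : ∀ x, 0 ≤ ρA0 x)
    (hρA01 : ∫ x, ρA0 x ∂μ = 1)
    (hentA0 : Integrable (fun x => ρA0 x * log (ρA0 x)) μ)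
    (ρ0 : X × (∀ i, Y i) → ℝ)
    (hρ0def : ∀ p : X × (∀ i, Y i), ρ0 p = ρA0 p.1 * ∏ i, τ i (p.2 i))
    (Φ : X × (∀ i, Y i) ≃ᵐ X × (∀ i, Y i))
    (hΦinv : MeasurePreserving Φ.symm (μ.prod (Measure.pi ν)) (μ.prod (Measure.pi ν)))
    (ρ1 : X × (∀ i, Y i) → ℝ) (hρ1def : ρ1 = ρ0 ∘ Φ.symm)
    (ρA1 : X → ℝ) (hρA1 : ∀ x, ρA1 x = ∫ y, ρ1 (x, y) ∂(Measure.pi ν))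
    (ρB1 : ∀ i, Y i → ℝ) (hρB1m : ∀ i, Measurable (ρB1 i))
    (hρB1 : ∀ i, ∀ s : Set (Y i), MeasurableSet s →
      ∫ y in s, ρB1 i y ∂(ν i) =
        ∫ p in {p : X × (∀ j, Y j) | p.2 i ∈ s}, ρ1 p ∂(μ.prod (Measure.pi ν)))
    (hentA1 : Integrable (fun x => ρA1 x * log (ρA1 x)) μ)
    (hHρB1 : ∀ i, Integrable (fun y => H i y * ρB1 i y) (ν i))
    (Q : ι → ℝ)
    (hQdef : ∀ i, Q i = (∫ y, H i y * τ i y ∂(ν i)) - ∫ y, H i y * ρB1 i y ∂(ν i)) :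
    ∑ i, Q i / T i ≤
      -(∫ x, ρA1 x * log (ρA1 x) ∂μ) - -(∫ x, ρA0 x * log (ρA0 x) ∂μ) := by
  have hρA0 : IsProbabilityDensity μ ρA0 := ⟨hρA0m, hρA00, hρA01⟩
  have hτ i := isProbabilityDensity_canonical (hH i) (hτdef i) (hZdef i) (hZpos i)
  have hτpos i := canonical_pos (hτdef i) (hZpos i)
  have hτne i y := (hτpos i y).ne'
  have hτlog i := integrable_mul_log_canonical (hτdef i) (hZpos i) (hτ i).integrable (hHτ i)
  have hρ0 : IsProbabilityDensity (μ.prod (Measure.pi ν)) ρ0 := by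
    rw [funext hρ0def]; exact hρA0.prod_mul (.pi_prod hτ)
  have hS0i : Integrable (fun p => ρ0 p * log (ρ0 p)) (μ.prod (Measure.pi ν)) := by
    simp_rw [hρ0def]; exact integrable_mul_log_prod_pi hρA0 hτ hτne hentA0 hτlog
  have hS0 : ∫ p, ρ0 p * log (ρ0 p) ∂μ.prod (Measure.pi ν) =
      ∫ x, ρA0 x * log (ρA0 x) ∂μ + ∑ i, ∫ y, τ i y * log (τ i y) ∂ν i := by
    simp_rw [hρ0def]; exact integral_mul_log_prod_pi hρA0 hτ hτne hentA0 hτlog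
  subst hρ1def
  have hρ1 := hρ0.comp_measurePreserving Φ.symm hΦinv
  have hρB1int i : ∫ y, ρB1 i y ∂ν i = 1 := IsPushforwardDensity.integral_eq_one (hρB1 i) hρ1
  have hgibbs := integral_mul_log_marginal_add_sum_le hρ1 hρA1 hρB1m hρB1 hτ hτpos
    ((hΦinv.integrable_comp_emb Φ.symm.measurableEmbedding).2 hS0i) hentA1 fun i =>
      integrable_mul_log_canonical (hτdef i) (hZpos i)
        (integrable_of_integral_eq_one (hρB1int i)) (hHρB1 i)
  simp only [Function.comp_apply, hΦinv.integral_comp' fun p => ρ0 p * log (ρ0 p), hS0] at hgibbs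
  have hQ i : Q i / T i = ∫ y, ρB1 i y * log (τ i y) ∂ν i - ∫ y, τ i y * log (τ i y) ∂ν i := by
    rw [hQdef, hT, one_div, div_inv_eq_mul,
      integral_mul_log_canonical (hτdef i) (hZpos i) (hρB1int i) (hHρB1 i),
      integral_mul_log_canonical (hτdef i) (hZpos i) (hτ i).integral_eq_one (hHτ i)]
    ring
  rw [Finset.sum_congr rfl fun i _ => hQ i, Finset.sum_sub_distrib]
  linarith

/-- Fundamental Theorem of Statistical Thermo-dynamics (classical case,
several heat reservoirs): `∑ i, ⟨Q_i⟩/T_i ≤ S[ρ_A¹] - S[ρ_A⁰]`. -/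
theorem fundamental_theorem_statistical_thermodynamics
    {X : Type*} [MeasurableSpace X] (μ : Measure X) [SigmaFinite μ]
    {ι : Type*} [Fintype ι] {Y : ι → Type*} [∀ i, MeasurableSpace (Y i)]
    (ν : ∀ i, Measure (Y i)) [∀ i, SigmaFinite (ν i)]
    (H : ∀ i, Y i → ℝ) (hH : ∀ i, Measurable (H i))
    (β : ι → ℝ) (hβ : ∀ i, 0 < β i) (T : ι → ℝ) (hT : ∀ i, T i = 1 / β i)
    (hZint : ∀ i, Integrable (fun y => exp (-β i * H i y)) (ν i))
    (Z : ι → ℝ) (hZdef : ∀ i, Z i = ∫ y, exp (-β i * H i y) ∂(ν i))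
    (hZpos : ∀ i, 0 < Z i)
    (τ : ∀ i, Y i → ℝ) (hτdef : ∀ i, ∀ y, τ i y = (Z i)⁻¹ * exp (-β i * H i y))
    (hHτ : ∀ i, Integrable (fun y => H i y * τ i y) (ν i))
    (hentτ : ∀ i, Integrable (fun y => τ i y * log (τ i y)) (ν i))
    (ρA0 : X → ℝ) (hρA0m : Measurable ρA0) (hρA00 : ∀ x, 0 ≤ ρA0 x)
    (hρA01 : ∫ x, ρA0 x ∂μ = 1)
    (hentA0 : Integrable (fun x => ρA0 x * log (ρA0 x)) μ)
    (ρ0 : X × (∀ i, Y i) → ℝ)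
    (hρ0def : ∀ p : X × (∀ i, Y i), ρ0 p = ρA0 p.1 * ∏ i, τ i (p.2 i))
    (Φ : X × (∀ i, Y i) ≃ᵐ X × (∀ i, Y i))
    (hΦ : MeasurePreserving Φ (μ.prod (Measure.pi ν)) (μ.prod (Measure.pi ν)))
    (hΦinv : MeasurePreserving Φ.symm (μ.prod (Measure.pi ν)) (μ.prod (Measure.pi ν)))
    (ρ1 : X × (∀ i, Y i) → ℝ) (hρ1def : ρ1 = ρ0 ∘ Φ.symm)
    (ρA1 : X → ℝ) (hρA1 : ∀ x, ρA1 x = ∫ y, ρ1 (x, y) ∂(Measure.pi ν))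
    (ρB1 : ∀ i, Y i → ℝ) (hρB1m : ∀ i, Measurable (ρB1 i))
    (hρB1 : ∀ i, ∀ s : Set (Y i), MeasurableSet s →
      ∫ y in s, ρB1 i y ∂(ν i) =
        ∫ p in {p : X × (∀ j, Y j) | p.2 i ∈ s}, ρ1 p ∂(μ.prod (Measure.pi ν)))
    (hentA1 : Integrable (fun x => ρA1 x * log (ρA1 x)) μ)
    (hentB1 : ∀ i, Integrable (fun y => ρB1 i y * log (ρB1 i y)) (ν i))
    (hHρB1 : ∀ i, Integrable (fun y => H i y * ρB1 i y) (ν i))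
    (Q : ι → ℝ)
    (hQdef : ∀ i, Q i = (∫ y, H i y * τ i y ∂(ν i)) - ∫ y, H i y * ρB1 i y ∂(ν i)) :
    ∑ i, Q i / T i ≤
      -(∫ x, ρA1 x * log (ρA1 x) ∂μ) - -(∫ x, ρA0 x * log (ρA0 x) ∂μ) :=
  fundamental_theorem_statistical_thermodynamics_general μ ν H hH β T hT Z hZdef hZpos τ hτdef hHτ
    ρA0 hρA0m hρA00 hρA01 hentA0 ρ0 hρ0def Φ hΦinv ρ1 hρ1def ρA1 hρA1 ρB1 hρB1m hρB1 hentA1 hHρB1 Q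
    hQdef
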